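/- Let G be a Vilenkin group and n ∈ ℕ_+ with x ∈ I_{⟨n⟩+1}(e_{⟨n⟩}) (so x_j = 0 for j < ⟨n⟩ and x_{⟨n⟩} = 1). Then |D_{M_{⟨n⟩}}(x) · ∑_{s=0}^{n_{⟨n⟩}−1} r_{⟨n⟩}^s(x)| = M_{⟨n⟩} · sin(π n_{⟨n⟩}/m_{⟨n⟩}) / sin(π/m_{⟨n⟩}) ≥ M_{⟨n⟩}. -/

import Mathlib

open MeasureTheory Complex Real

def Mseq (m : ℕ → ℕ) : ℕ → ℕ
  | 0 => 1
  | k + 1 => m k * Mseq m k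

def digit (m : ℕ → ℕ) (n j : ℕ) : ℕ := n / Mseq m j % m j

noncomputable def hi (m : ℕ → ℕ) (n : ℕ) : ℕ := sSup {j | digit m n j ≠ 0}

noncomputable def lo (m : ℕ → ℕ) (n : ℕ) : ℕ := sInf {j | digit m n j ≠ 0}

noncomputable def rho (m : ℕ → ℕ) (n : ℕ) : ℕ := hi m n - lo m n

abbrev Gm (m : ℕ → ℕ) := ∀ k, ZMod (m k)

instance (n : ℕ) : MeasurableSpace (ZMod n) := ⊤

noncomputable def rad (m : ℕ → ℕ) (j : ℕ) (x : Gm m) : ℂ :=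
  Complex.exp (2 * Real.pi * Complex.I * ((x j).val : ℂ) / (m j : ℂ))

noncomputable def vil (m : ℕ → ℕ) (n : ℕ) (x : Gm m) : ℂ :=
  ∏ᶠ j, rad m j x ^ digit m n j

noncomputable def Dker (m : ℕ → ℕ) (n : ℕ) (x : Gm m) : ℂ :=
  ∑ k ∈ Finset.range n, vil m k x

/-- The defining property of the normalized Haar measure on the Vilenkin group:
every cylinder set `I_n(x)` has measure `1 / M_n`. -/
def IsVilenkinHaar (m : ℕ → ℕ) (μ : Measure (Gm m)) : Prop :=
  ∀ (n : ℕ) (x : Gm m), μ {y : Gm m | ∀ j < n, y j = x j} = (Mseq m n : ENNReal)⁻¹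

noncomputable def vilCoeff (m : ℕ → ℕ) (μ : Measure (Gm m)) (f : Gm m → ℂ) (j : ℕ) : ℂ :=
  ∫ t, f t * (starRingEnd ℂ) (vil m j t) ∂μ

noncomputable def Svil (m : ℕ → ℕ) (μ : Measure (Gm m)) (f : Gm m → ℂ) (n : ℕ) (x : Gm m) : ℂ :=
  ∑ j ∈ Finset.range n, vilCoeff m μ f j * vil m j x

/-! Write `N = ⟨n⟩`, `d = n_N` and `M = m_N`. As `x` vanishes below `N`, every Vilenkin function
`ψ_k` with `k < M_N` (whose digits sit below `N`) equals `1` at `x`, so `D_{M_N}(x) = M_N`.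
As `x_N = 1`, `r_N(x) = e^{2πi/M}`, and the geometric sum `∑_{s<d} e^{2πis/M}` has modulus
`sin(πd/M) / sin(π/M)`. Finally `1 ≤ d ≤ M - 1` puts `πd/M` in `[π/M, π - π/M]`, where by
concavity `sin` is at least its common endpoint value `sin(π/M)`. -/

lemma Mseq_succ (m : ℕ → ℕ) (k : ℕ) : Mseq m (k + 1) = m k * Mseq m k := rfl

lemma Mseq_pos {m : ℕ → ℕ} (hm : ∀ k, 0 < m k) (k : ℕ) : 0 < Mseq m k := by
  induction k with
  | zero => exact Nat.one_pos
  | succ k ih => exact Nat.mul_pos (hm k) ih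

lemma Mseq_mono {m : ℕ → ℕ} (hm : ∀ k, 0 < m k) : Monotone (Mseq m) :=
  monotone_nat_of_le_succ fun k => Nat.le_mul_of_pos_left _ (hm k)

lemma Mseq_strictMono {m : ℕ → ℕ} (hm : ∀ k, 1 < m k) : StrictMono (Mseq m) :=
  strictMono_nat_of_lt_succ fun k =>
    (Nat.lt_mul_iff_one_lt_left (Mseq_pos (fun j => (hm j).le) k)).2 (hm k)

lemma Mseq_dvd_of_forall_digit_eq_zero {m : ℕ → ℕ} {n : ℕ} (h : ∀ j, digit m n j = 0) (k : ℕ) :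
    Mseq m k ∣ n := by
  induction k with
  | zero => exact one_dvd n
  | succ k ih =>
    rw [Mseq_succ, mul_comm]
    exact Nat.mul_dvd_of_dvd_div ih (Nat.dvd_of_mod_eq_zero (h k))

lemma exists_digit_ne_zero {m : ℕ → ℕ} (hm : ∀ k, 1 < m k) {n : ℕ} (hn : n ≠ 0) :
    ∃ j, digit m n j ≠ 0 := by
  by_contra! h
  have hlt : n < Mseq m (n + 1) :=
    ((Mseq_strictMono hm).id_le n).trans_lt (Mseq_strictMono hm n.lt_succ_self)
  exact hn (Nat.eq_zero_of_dvd_of_lt (Mseq_dvd_of_forall_digit_eq_zero h _) hlt)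

lemma digit_lt {m : ℕ → ℕ} {j : ℕ} (hm : 0 < m j) (n : ℕ) : digit m n j < m j :=
  Nat.mod_lt _ hm

lemma digit_eq_zero_of_lt_Mseq {m : ℕ → ℕ} {n j : ℕ} (hn : n < Mseq m j) : digit m n j = 0 := by
  simp [digit, Nat.div_eq_of_lt hn]

lemma rad_eq_one_of_eq_zero {m : ℕ → ℕ} {j : ℕ} {x : Gm m} (hx : x j = 0) : rad m j x = 1 := by
  simp [rad, hx]

lemma rad_eq_exp_of_eq_one {m : ℕ → ℕ} {j : ℕ} (hm : 1 < m j) {x : Gm m} (hx : x j = 1) :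
    rad m j x = Complex.exp (Complex.I * ((2 * π / m j : ℝ) : ℂ)) := by
  have : Fact (1 < m j) := ⟨hm⟩
  rw [rad, hx, ZMod.val_one]
  push_cast
  ring_nf

lemma vil_eq_one_of_lt_Mseq {m : ℕ → ℕ} (hm : ∀ k, 0 < m k) {N : ℕ} {x : Gm m}
    (hx : ∀ j < N, x j = 0) {k : ℕ} (hk : k < Mseq m N) : vil m k x = 1 := by
  refine finprod_eq_one_of_forall_eq_one fun j => ?_
  rcases lt_or_ge j N with hj | hj
  · rw [rad_eq_one_of_eq_zero (hx j hj), one_pow]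
  · rw [digit_eq_zero_of_lt_Mseq (hk.trans_le (Mseq_mono hm hj)), pow_zero]

lemma Dker_Mseq_eq {m : ℕ → ℕ} (hm : ∀ k, 0 < m k) {N : ℕ} {x : Gm m} (hx : ∀ j < N, x j = 0) :
    Dker m (Mseq m N) x = Mseq m N := by
  rw [Dker, Finset.sum_congr rfl fun k hk => vil_eq_one_of_lt_Mseq hm hx (Finset.mem_range.1 hk)]
  simp

lemma norm_geom_sum_exp_I_mul {θ : ℝ} (hθ : Real.sin (θ / 2) ≠ 0) (d : ℕ) :
    ‖∑ s ∈ Finset.range d, Complex.exp (Complex.I * θ) ^ s‖ =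
      |Real.sin (d * θ / 2)| / |Real.sin (θ / 2)| := by
  have hne : Complex.exp (Complex.I * θ) ≠ 1 := by
    intro h
    apply hθ
    simpa [h] using Complex.norm_exp_I_mul_ofReal_sub_one θ
  rw [geom_sum_eq hne, ← Complex.exp_nat_mul, norm_div,
    show (d : ℂ) * (Complex.I * θ) = Complex.I * ((d * θ : ℝ) : ℂ) by push_cast; ring,
    Complex.norm_exp_I_mul_ofReal_sub_one, Complex.norm_exp_I_mul_ofReal_sub_one,
    norm_mul, norm_mul, mul_div_mul_left _ _ (by norm_num), Real.norm_eq_abs, Real.norm_eq_abs]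

lemma sin_pi_div_le_sin_pi_mul_div {M d : ℝ} (hd : 1 ≤ d) (hdM : d ≤ M - 1) :
    Real.sin (π / M) ≤ Real.sin (π * d / M) := by
  have hM : 0 < M := by linarith
  have hpos : 0 < π / M := by positivity
  have hle : π / M ≤ π := div_le_self pi_pos.le (by linarith)
  have hlo : π / M ≤ π * d / M := by gcongr; exact le_mul_of_one_le_right pi_pos.le hd
  have hhi : π * d / M ≤ π - π / M := by
    rw [div_le_iff₀ hM, sub_mul, div_mul_cancel₀ _ hM.ne']; nlinarith [pi_pos]
  have hmin := strictConcaveOn_sin_Icc.concaveOn.min_le_of_mem_Icc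
    ⟨hpos.le, hle⟩ ⟨by linarith, by linarith⟩ ⟨hlo, hhi⟩
  rwa [Real.sin_pi_sub, min_self] at hmin

/-- For `n ≥ 1` and `x ∈ I_{⟨n⟩+1}(e_{⟨n⟩})`,
`|D_{M_{⟨n⟩}}(x) ∑_{s=0}^{n_{⟨n⟩}-1} r_{⟨n⟩}^s(x)|
  = M_{⟨n⟩} sin (π n_{⟨n⟩}/m_{⟨n⟩}) / sin (π/m_{⟨n⟩}) ≥ M_{⟨n⟩}`. -/
theorem stmt_11 (m : ℕ → ℕ) (hm : ∀ k, 2 ≤ m k) (n : ℕ) (hn : 1 ≤ n)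
    (x : Gm m) (hx1 : ∀ j < lo m n, x j = 0) (hx2 : x (lo m n) = 1) :
    ‖(Dker m (Mseq m (lo m n)) x *
          ∑ s ∈ Finset.range (digit m n (lo m n)), rad m (lo m n) x ^ s)‖
        = (Mseq m (lo m n) : ℝ) *
            (Real.sin (Real.pi * digit m n (lo m n) / m (lo m n)) /
              Real.sin (Real.pi / m (lo m n))) ∧
      (Mseq m (lo m n) : ℝ) ≤
        ‖(Dker m (Mseq m (lo m n)) x *
          ∑ s ∈ Finset.range (digit m n (lo m n)), rad m (lo m n) x ^ s)‖ := by
  set N := lo m n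
  set d := digit m n N
  have hm_pos : ∀ k, 0 < m k := fun k => zero_lt_two.trans_le (hm k)
  have hd : d ≠ 0 := Nat.sInf_mem (exists_digit_ne_zero hm (Nat.one_le_iff_ne_zero.1 hn))
  have hdm : (d : ℝ) ≤ m N - 1 := by
    have := digit_lt (hm_pos N) n
    rw [le_sub_iff_add_le]; exact_mod_cast this
  have hsin_le : Real.sin (π / m N) ≤ Real.sin (π * d / m N) :=
    sin_pi_div_le_sin_pi_mul_div (by exact_mod_cast Nat.one_le_iff_ne_zero.2 hd) hdm
  have hsin_pos : 0 < Real.sin (π / m N) := by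
    have : (1 : ℝ) < m N := by exact_mod_cast hm N
    exact sin_pos_of_pos_of_lt_pi (by positivity) (div_lt_self pi_pos this)
  have hnorm : ‖Dker m (Mseq m N) x * ∑ s ∈ Finset.range d, rad m N x ^ s‖ =
      Mseq m N * (Real.sin (π * d / m N) / Real.sin (π / m N)) := by
    have hhalf : 2 * π / m N / 2 = π / m N := by ring
    have hdhalf : d * (2 * π / m N) / 2 = π * d / m N := by ring
    rw [norm_mul, Dker_Mseq_eq hm_pos hx1, Complex.norm_natCast, rad_eq_exp_of_eq_one (hm N) hx2,
      norm_geom_sum_exp_I_mul (hhalf ▸ hsin_pos.ne'), hhalf, hdhalf,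
      abs_of_pos hsin_pos, abs_of_pos (hsin_pos.trans_le hsin_le)]
  refine ⟨hnorm, hnorm ▸ le_mul_of_one_le_right (Nat.cast_nonneg _) ?_⟩
  exact (one_le_div hsin_pos).2 hsin_le
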